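/- Let P, Q : ℤ → ℝ with P(n) ≠ 0 for all n, and set P̂(n) = 1/P(n), Q̂(n) = Q(n+1)/(P(n)P(n+1)). Then for every pair ξ = (ξ₁, ξ₂) of functions ℤ → ℝ one has (𝒥 ∘ 𝒫₁ ∘ 𝒥*)(ξ) = −𝒫̂₃(ξ), where 𝒫̂₃ is the operator 𝒫₃ with P replaced by P̂, Q replaced by Q̂, and the shift Λ replaced by Λ⁻¹. -/

import Mathlib

/-- The shift by `e`: `(shiftE e f) n = f (n + e)`; `shiftE 1 = Λ`, `shiftE (-1) = Λ⁻¹`. -/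
def shiftE (e : ℤ) (f : ℤ → ℝ) : ℤ → ℝ := fun n => f (n + e)

/-- The first Hamiltonian operator of the Ablowitz–Ladik hierarchy, with the shift `Λ`
replaced by `Λᵉ`:
`𝒫₁(ξ) = ( Qξ₁⁻ − (Qξ₁)⁺ + Qξ₂ − (Qξ₂)⁺ , Q(ξ₁⁻ − ξ₁) )`. -/
def P1gen (e : ℤ) (Q : ℤ → ℝ) (ξ : (ℤ → ℝ) × (ℤ → ℝ)) : (ℤ → ℝ) × (ℤ → ℝ) :=
  (Q * shiftE (-e) ξ.1 - shiftE e (Q * ξ.1) + Q * ξ.2 - shiftE e (Q * ξ.2),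
   Q * (shiftE (-e) ξ.1 - ξ.1))

/-- The third Hamiltonian operator of the Ablowitz–Ladik hierarchy, with the shift `Λ`
replaced by `Λᵉ`:
`𝒫₃ = [[P(QΛ⁻¹ − ΛQ)P, P((Q − ΛQΛ)(1+Λ⁻¹) − P(1−Λ))Q],`
`      [Q((Λ+1)(Λ⁻¹QΛ⁻¹ − Q) + (1−Λ⁻¹)P)P, Q((1+Λ⁻¹)(Q − ΛQΛ)(1+Λ⁻¹) + 2(PΛ − Λ⁻¹P))Q]]`,
where functions act by pointwise multiplication and entries are operator compositions. -/
def P3gen (e : ℤ) (P Q : ℤ → ℝ) (ξ : (ℤ → ℝ) × (ℤ → ℝ)) : (ℤ → ℝ) × (ℤ → ℝ) :=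
  let g := Q * ξ.2
  let h := P * ξ.1
  let hh := g + shiftE (-e) g
  let w := Q * hh - shiftE e (Q * shiftE e hh)
  (P * (Q * shiftE (-e) h - shiftE e (Q * h))
     + P * ((Q * hh - shiftE e (Q * shiftE e hh)) - P * (g - shiftE e g)),
   Q * ((shiftE e (shiftE (-e) (Q * shiftE (-e) h) - Q * h)
          + (shiftE (-e) (Q * shiftE (-e) h) - Q * h))
        + (P * h - shiftE (-e) (P * h)))
     + Q * ((w + shiftE (-e) w) + 2 * (P * shiftE e g - shiftE (-e) (P * g))))

/-- The gauge operator
`𝒥(ξ) = ( −ξ₁/P², −(Q⁺/(P²P⁺))ξ₁ − (Q⁺/(P(P⁺)²))ξ₁⁺ + ξ₂⁺/(PP⁺) )`. -/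
noncomputable def Jgauge (P Q : ℤ → ℝ) (ξ : (ℤ → ℝ) × (ℤ → ℝ)) : (ℤ → ℝ) × (ℤ → ℝ) :=
  (fun n => -ξ.1 n / P n ^ 2,
   fun n => -(Q (n + 1) / (P n ^ 2 * P (n + 1))) * ξ.1 n
     - (Q (n + 1) / (P n * P (n + 1) ^ 2)) * ξ.1 (n + 1)
     + ξ.2 (n + 1) / (P n * P (n + 1)))

/-- The gauge operator
`𝒥*(ξ) = ( −ξ₁/P² − (Q⁺/(P²P⁺))ξ₂ − (Q/(P²P⁻))ξ₂⁻, ξ₂⁻/(PP⁻) )`. -/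
noncomputable def JgaugeStar (P Q : ℤ → ℝ) (ξ : (ℤ → ℝ) × (ℤ → ℝ)) : (ℤ → ℝ) × (ℤ → ℝ) :=
  (fun n => -ξ.1 n / P n ^ 2 - (Q (n + 1) / (P n ^ 2 * P (n + 1))) * ξ.2 n
     - (Q n / (P n ^ 2 * P (n - 1))) * ξ.2 (n - 1),
   fun n => ξ.2 (n - 1) / (P n * P (n - 1)))

/-!
Both sides are difference operators whose coefficients are rational in the values of `P` and `Q`.
At a site `n` they involve only the values of `P`, `Q`, `ξ` at `n - 2, …, n + 2`, so once every
index is written as `n + c` for a numeral `c` and the denominators `P k` are cleared, each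
component of the identity is a polynomial identity in finitely many real variables.
-/

@[simp]
theorem shiftE_apply (e : ℤ) (f : ℤ → ℝ) (n : ℤ) : shiftE e f n = f (n + e) := rfl

noncomputable def P3hat (P Q : ℤ → ℝ) : (ℤ → ℝ) × (ℤ → ℝ) → (ℤ → ℝ) × (ℤ → ℝ) :=
  P3gen (-1) (fun n => 1 / P n) (fun n => Q (n + 1) / (P n * P (n + 1)))

section GaugeIdentity

variable {P : ℤ → ℝ} (Q : ℤ → ℝ) (ξ : (ℤ → ℝ) × (ℤ → ℝ)) (n : ℤ)

theorem Jgauge_P1gen_JgaugeStar_fst (hP : ∀ n, P n ≠ 0) :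
    (Jgauge P Q (P1gen 1 Q (JgaugeStar P Q ξ))).1 n = -(P3hat P Q ξ).1 n := by
  simp only [Jgauge, P1gen, JgaugeStar, P3hat, P3gen, shiftE_apply, Pi.mul_apply, Pi.add_apply,
    Pi.sub_apply]
  simp only [sub_eq_add_neg, add_assoc]
  norm_num
  field_simp [hP]
  ring

theorem Jgauge_P1gen_JgaugeStar_snd (hP : ∀ n, P n ≠ 0) :
    (Jgauge P Q (P1gen 1 Q (JgaugeStar P Q ξ))).2 n = -(P3hat P Q ξ).2 n := by
  simp only [Jgauge, P1gen, JgaugeStar, P3hat, P3gen, shiftE_apply, Pi.mul_apply, Pi.add_apply,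
    Pi.sub_apply, Pi.ofNat_apply]
  simp only [sub_eq_add_neg, add_assoc]
  norm_num
  field_simp [hP]
  ring

end GaugeIdentity

/-- With `P̂(n) = 1/P(n)` and `Q̂(n) = Q(n+1)/(P(n)P(n+1))`, one has
`𝒥 ∘ 𝒫₁ ∘ 𝒥* = −𝒫̂₃`, where `𝒫̂₃` is the operator `𝒫₃` with `P` replaced by `P̂`,
`Q` replaced by `Q̂`, and the shift `Λ` replaced by `Λ⁻¹`. -/
theorem gauge_P1_eq_neg_P3hat (P Q : ℤ → ℝ) (hP : ∀ n : ℤ, P n ≠ 0) :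
    ∀ ξ : (ℤ → ℝ) × (ℤ → ℝ),
      (Jgauge P Q ∘ P1gen 1 Q ∘ JgaugeStar P Q) ξ =
        -(P3gen (-1) (fun n => 1 / P n) (fun n => Q (n + 1) / (P n * P (n + 1))) ξ) := fun ξ =>
  Prod.ext (funext fun n => Jgauge_P1gen_JgaugeStar_fst Q ξ n hP)
    (funext fun n => Jgauge_P1gen_JgaugeStar_snd Q ξ n hP)
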